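/- For every integer m ≥ 2 and every r ∈ ℤ/nℤ, every monomial occurring with nonzero coefficient in σ_{(n−1)(m−1)}^{(r)}(x_1,…,x_m) that is divisible by the variable x_m^{(r−(n−1)(m−2))} is divisible by the product x_m^{(r−(n−1)(m−2))} · x_m^{(r−(n−1)(m−2)−1)} ⋯ x_m^{(r−(n−1)(m−1)+1)} of n−1 variables (superscripts mod n). -/
import Mathlib


noncomputable section

open Finset MvPolynomial

open Classical in
/-- `τ_k^{(s)}(x_a, …, x_b)` (1-indexed window `a ≤ i ≤ b`): the sum over weakly increasing
sequences `a ≤ i_1 ≤ ⋯ ≤ i_k ≤ b` in which no value occurs more than `n - 1` times of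
`x_{i_1}^{(s)} x_{i_2}^{(s-1)} ⋯ x_{i_k}^{(s-k+1)}`; zero for `k < 0`. -/
def lT (n m a b : ℕ) (k : ℤ) (s : ZMod n) : MvPolynomial (Fin m × ZMod n) ℤ :=
  if 0 ≤ k then
    ∑ f ∈ Finset.univ.filter (fun f : Fin k.toNat → Fin m =>
        Monotone f ∧ (∀ j, a ≤ (f j : ℕ) + 1 ∧ (f j : ℕ) + 1 ≤ b) ∧
        ∀ v : Fin m, (Finset.univ.filter (fun j => f j = v)).card ≤ n - 1),
      ∏ j : Fin k.toNat, MvPolynomial.X (f j, s - ((j : ℕ) : ZMod n))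
  else 0

/-- `σ_k^{(s)}(x_a, …, x_b) = ∑_{i=0}^k x_a^{(s)} x_a^{(s-1)} ⋯ x_a^{(s-i+1)} ·
τ_{k-i}^{(s-i)}(x_{a+1}, …, x_b)`. -/
def lS (n m a b k : ℕ) (s : ZMod n) : MvPolynomial (Fin m × ZMod n) ℤ :=
  ∑ i ∈ Finset.range (k + 1),
    (∏ u ∈ Finset.range i,
      if h : a - 1 < m then MvPolynomial.X ((⟨a - 1, h⟩ : Fin m), s - (u : ZMod n)) else 0) *
    lT n m (a + 1) b ((k - i : ℕ) : ℤ) (s - (i : ZMod n))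

lemma prod_X_eq_monomial {m n : ℕ} {α : Type*} (s : Finset α) (g : α → Fin m × ZMod n) :
    ∏ a ∈ s, (MvPolynomial.X (g a) : MvPolynomial (Fin m × ZMod n) ℤ) =
      MvPolynomial.monomial (∑ a ∈ s, Finsupp.single (g a) 1) 1 := by
  induction s using Finset.cons_induction with
  | empty => simp
  | cons a s ha ih =>
      rw [Finset.prod_cons, ih, Finset.sum_cons, MvPolynomial.X, MvPolynomial.monomial_mul,
        one_mul]

/-- every monomial of `σ_{(n−1)(m−1)}^{(r)}(x_1,…,x_m)` divisible by
`x_m^{(r−(n−1)(m−2))}` is divisible by the product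
`x_m^{(r−(n−1)(m−2))} x_m^{(r−(n−1)(m−2)−1)} ⋯ x_m^{(r−(n−1)(m−1)+1)}` of `n−1` variables. -/
theorem sigma_monomial_chain (n m : ℕ) (hn : 1 < n) (hm : 2 ≤ m) (r : ZMod n) :
    ∀ d ∈ (lS n m 1 m ((n - 1) * (m - 1)) r).support,
      (MvPolynomial.X ((⟨m - 1, by omega⟩ : Fin m),
          r - (((n - 1) * (m - 2) : ℕ) : ZMod n)) ∣
        (MvPolynomial.monomial d (1 : ℤ) : MvPolynomial (Fin m × ZMod n) ℤ)) →
      (∏ u ∈ Finset.range (n - 1),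
          MvPolynomial.X ((⟨m - 1, by omega⟩ : Fin m),
            r - (((n - 1) * (m - 2) : ℕ) : ZMod n) - (u : ZMod n))) ∣
        (MvPolynomial.monomial d (1 : ℤ) : MvPolynomial (Fin m × ZMod n) ℤ) := by
  intro d hd hdvd
  classical
  set K : ℕ := (n - 1) * (m - 1) with hK
  set P : ℕ := (n - 1) * (m - 2) with hP
  have hKP : K = P + (n - 1) := by
    have h2 : m - 1 = (m - 2) + 1 := by omega
    rw [hK, hP, h2, Nat.mul_succ]
  have hm1 : m - 1 < m := by omega
  set m₁ : Fin m := ⟨m - 1, hm1⟩ with hm₁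
  set c₀ : ZMod n := r - ((P : ℕ) : ZMod n) with hc₀
  -- Step 1: extract i and f.
  rw [lS] at hd
  have hd1 := Finset.mem_biUnion.mp (MvPolynomial.support_sum hd)
  obtain ⟨i, hi, hdi⟩ := hd1
  rw [Finset.mem_range] at hi
  rw [lT, if_pos (Int.natCast_nonneg _)] at hdi
  simp only [Int.toNat_natCast] at hdi
  set k : ℕ := K - i with hk
  have hchain : (∏ u ∈ Finset.range i,
      if h : 1 - 1 < m then (MvPolynomial.X ((⟨1 - 1, h⟩ : Fin m), r - (u : ZMod n)) :
        MvPolynomial (Fin m × ZMod n) ℤ) else 0) =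
      MvPolynomial.monomial
        (∑ u ∈ Finset.range i, Finsupp.single ((⟨0, by omega⟩ : Fin m), r - (u : ZMod n)) 1) 1 := by
    rw [← prod_X_eq_monomial]
    exact Finset.prod_congr rfl fun u _ => dif_pos (by omega)
  rw [hchain, Finset.mul_sum] at hdi
  obtain ⟨f, hfmem, hdf⟩ := Finset.mem_biUnion.mp (MvPolynomial.support_sum hdi)
  rw [prod_X_eq_monomial, MvPolynomial.monomial_mul, mul_one,
    MvPolynomial.support_monomial, if_neg one_ne_zero, Finset.mem_singleton] at hdf
  set A : (Fin m × ZMod n) →₀ ℕ :=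
    ∑ u ∈ Finset.range i, Finsupp.single ((⟨0, by omega⟩ : Fin m), r - (u : ZMod n)) 1 with hA
  set B : (Fin m × ZMod n) →₀ ℕ :=
    ∑ j : Fin k, Finsupp.single (f j, r - (i : ZMod n) - ((j : ℕ) : ZMod n)) 1 with hB
  rw [Finset.mem_filter] at hfmem
  obtain ⟨-, hmono, -, hmult⟩ := hfmem
  -- A vanishes on variables with first coordinate m₁
  have hA0 : ∀ c : ZMod n, A (m₁, c) = 0 := by
    intro c
    rw [hA, Finset.sum_apply']
    refine Finset.sum_eq_zero fun u _ => ?_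
    rw [Finsupp.single_apply, if_neg]
    intro h
    have : (0 : ℕ) = m - 1 := congrArg (fun p => (p.1 : ℕ)) h
    omega
  have hdapp : ∀ c : ZMod n, d (m₁, c) = B (m₁, c) := by
    intro c
    rw [hdf, Finsupp.add_apply, hA0, zero_add]
  -- Step 2: extract j₀ from the divisibility hypothesis.
  have hX : (MvPolynomial.X (m₁, c₀) : MvPolynomial (Fin m × ZMod n) ℤ)
      = MvPolynomial.monomial (Finsupp.single (m₁, c₀) 1) 1 := rfl
  rw [hX, MvPolynomial.monomial_dvd_monomial] at hdvd
  have hle : Finsupp.single (m₁, c₀) 1 ≤ d := by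
    rcases hdvd.1 with h | h
    · exact absurd h one_ne_zero
    · exact h
  have hd0 : 1 ≤ d (m₁, c₀) := by
    have := Finsupp.le_def.mp hle (m₁, c₀)
    simpa using this
  have hB0 : B (m₁, c₀) ≠ 0 := by
    rw [← hdapp]; omega
  rw [hB, Finset.sum_apply'] at hB0
  obtain ⟨j₀, -, hj₀⟩ := Finset.exists_ne_zero_of_sum_ne_zero hB0
  rw [Finsupp.single_apply] at hj₀
  have hj₀' : (f j₀, r - (i : ZMod n) - ((j₀ : ℕ) : ZMod n)) = (m₁, c₀) := by
    by_contra h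
    rw [if_neg h] at hj₀
    exact hj₀ rfl
  have hfj₀ : f j₀ = m₁ := congrArg Prod.fst hj₀'
  have hcj₀ : r - (i : ZMod n) - ((j₀ : ℕ) : ZMod n) = c₀ := congrArg Prod.snd hj₀'
  -- every j ≥ j₀ maps to m₁
  have htop : ∀ j, j₀ ≤ j → f j = m₁ := by
    intro j hj
    have h1 : f j₀ ≤ f j := hmono hj
    rw [hfj₀] at h1
    have h3 : (m - 1 : ℕ) ≤ (f j : ℕ) := h1
    have h4 := (f j).isLt
    refine Fin.ext ?_
    show (f j : ℕ) = m - 1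
    omega
  -- L := k - j₀ satisfies 1 ≤ L ≤ n - 1
  set L : ℕ := k - (j₀ : ℕ) with hL
  have hLub : L ≤ n - 1 := by
    have hsub : Finset.Ici j₀ ⊆ Finset.univ.filter (fun j => f j = m₁) := by
      intro j hj
      rw [Finset.mem_filter]
      exact ⟨Finset.mem_univ _, htop j (Finset.mem_Ici.mp hj)⟩
    have := Finset.card_le_card hsub
    rw [Fin.card_Ici] at this
    exact le_trans this (hmult m₁)
  have hj₀lt : (j₀ : ℕ) < k := j₀.isLt
  have hLpos : 1 ≤ L := by omega
  -- modular arithmetic: L = n - 1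
  have hcast : ((i + (j₀ : ℕ) : ℕ) : ZMod n) = ((P : ℕ) : ZMod n) := by
    push_cast
    have := hcj₀
    rw [hc₀] at this
    linear_combination -this
  have hmodeq : (i + (j₀ : ℕ)) ≡ P [MOD n] := (ZMod.natCast_eq_natCast_iff _ _ _).mp hcast
  have hik : i + k = K := by omega
  have hsum : i + (j₀ : ℕ) + L = K := by omega
  have h1 : P + (n - 1) ≡ P + L [MOD n] := by
    calc P + (n - 1) = (i + (j₀ : ℕ)) + L := by omega
    _ ≡ P + L [MOD n] := Nat.ModEq.add_right L hmodeq
  have h2 : (n - 1) ≡ L [MOD n] := Nat.ModEq.add_left_cancel' P h1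
  have hLn : L = n - 1 := by
    have h3 : (n - 1) % n = L % n := h2
    rw [Nat.mod_eq_of_lt (by omega), Nat.mod_eq_of_lt (by omega)] at h3
    omega
  -- Step 3: d has the needed variables
  have hdge : ∀ u : ℕ, u < n - 1 → 1 ≤ d (m₁, c₀ - (u : ZMod n)) := by
    intro u hu
    have hjlt : (j₀ : ℕ) + u < k := by omega
    set j : Fin k := ⟨(j₀ : ℕ) + u, hjlt⟩ with hj
    have hfj : f j = m₁ := htop j (by
      rw [Fin.le_def]; simp [hj])
    have hcol : r - (i : ZMod n) - ((j : ℕ) : ZMod n) = c₀ - (u : ZMod n) := by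
      have hjval : ((j : ℕ) : ZMod n) = ((j₀ : ℕ) : ZMod n) + (u : ZMod n) := by
        rw [hj]; push_cast; ring
      rw [hjval, ← hcj₀]; ring
    rw [hdapp, hB, Finset.sum_apply']
    have hterm : (Finsupp.single (f j, r - (i : ZMod n) - ((j : ℕ) : ZMod n)) (1 : ℕ))
        (m₁, c₀ - (u : ZMod n)) = 1 := by
      rw [hfj, hcol, Finsupp.single_apply, if_pos rfl]
    refine le_trans (le_of_eq hterm.symm) ?_
    exact Finset.single_le_sum
      (f := fun j' : Fin k => (Finsupp.single (f j', r - (i : ZMod n) - ((j' : ℕ) : ZMod n))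
        (1 : ℕ)) (m₁, c₀ - (u : ZMod n)))
      (fun _ _ => Nat.zero_le _) (Finset.mem_univ j)
  -- Step 4: conclude
  rw [prod_X_eq_monomial, MvPolynomial.monomial_dvd_monomial]
  refine ⟨Or.inr ?_, dvd_refl 1⟩
  rw [Finsupp.le_def]
  intro v
  simp only [Finset.sum_apply']
  by_cases hv : ∃ u ∈ Finset.range (n - 1), ((m₁ : Fin m), c₀ - (u : ZMod n)) = v
  · obtain ⟨u₀, hu₀mem, hu₀⟩ := hv
    have hu₀lt : u₀ < n - 1 := Finset.mem_range.mp hu₀mem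
    have huinj : ∀ u ∈ Finset.range (n - 1),
        (Finsupp.single ((m₁ : Fin m), c₀ - (u : ZMod n)) (1 : ℕ)) v
          ≤ if u = u₀ then 1 else 0 := by
      intro u hu
      rw [Finset.mem_range] at hu
      by_cases h : u = u₀
      · rw [if_pos h, Finsupp.single_apply]
        split <;> omega
      · rw [if_neg h, Finsupp.single_apply, if_neg]
        intro hcontra
        apply h
        have hab : c₀ - ((u : ℕ) : ZMod n) = c₀ - ((u₀ : ℕ) : ZMod n) :=
          congrArg Prod.snd (hcontra.trans hu₀.symm)
        have h1 : ((u : ℕ) : ZMod n) = ((u₀ : ℕ) : ZMod n) := by linear_combination -hab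
        have h2 : u % n = u₀ % n := (ZMod.natCast_eq_natCast_iff _ _ _).mp h1
        rw [Nat.mod_eq_of_lt (by omega), Nat.mod_eq_of_lt (by omega)] at h2
        exact h2
    have hsum1 : (∑ u ∈ Finset.range (n - 1),
        (Finsupp.single ((m₁ : Fin m), c₀ - (u : ZMod n)) (1 : ℕ)) v) ≤ 1 := by
      calc _ ≤ ∑ u ∈ Finset.range (n - 1), if u = u₀ then 1 else 0 :=
            Finset.sum_le_sum huinj
      _ = 1 := by simp [hu₀mem]
    refine le_trans hsum1 ?_
    rw [← hu₀]
    exact hdge u₀ hu₀lt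
  · push_neg at hv
    have : (∑ u ∈ Finset.range (n - 1),
        (Finsupp.single ((m₁ : Fin m), c₀ - (u : ZMod n)) (1 : ℕ)) v) = 0 := by
      refine Finset.sum_eq_zero fun u hu => ?_
      rw [Finsupp.single_apply, if_neg (hv u hu)]
    rw [this]
    exact Nat.zero_le _


end
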